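/- arXiv:1605.01748 — 3 statements merged into one kernel-verified Lean document; each statement's English description precedes it below -/
import Mathlib

section
/- In the md-value-disperse protocol, the sender transmits the full value (of size 1) to f+1 servers, and each of those f+1 servers may transmit the full value to at most f further servers and coded elements (of size 1/k) to the remaining n - f - 1 servers; consequently, with k = n - f and f ≤ (n-1)/2, the total write communication cost is at most 5f², i.e., O(f²). -/
/-!
The sender and the `f + 1` first servers ship `f + 1` full values followed by
`f + (f - 1) + ⋯ + 0 = f (f + 1) / 2` forwarded copies, and each of the `f + 1` servers
sends fewer than `n - f` coded elements of size `1 / (n - f)`, i.e. less than one value.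
The total is at most `(f + 1) (f + 4) / 2`, and `10 f² - (f + 1) (f + 4) = (f - 1) (9 f + 4) ≥ 0`.
-/

open Finset

theorem sum_range_succ_tsub_mul_two (f : ℕ) :
    (∑ i ∈ range (f + 1), ((f - i : ℕ) : ℝ)) * 2 = ((f : ℝ) + 1) * f := by
  have hreflect : ∑ i ∈ range (f + 1), (f - i) = ∑ i ∈ range (f + 1), i := by
    simpa using sum_range_reflect (fun i => i) (f + 1)
  have hgauss : (∑ i ∈ range (f + 1), (f - i)) * 2 = (f + 1) * f := by
    rw [hreflect, sum_range_id_mul_two, Nat.add_sub_cancel]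
  exact_mod_cast hgauss

theorem cast_pred_mul_one_div_le_one (m : ℕ) : ((m - 1 : ℕ) : ℝ) * (1 / (m : ℝ)) ≤ 1 := by
  rw [mul_one_div]
  exact div_le_one_of_le₀ (by exact_mod_cast Nat.sub_le m 1) m.cast_nonneg

theorem soda_write_cost_general (n f : ℕ) (hf1 : 1 ≤ f) :
    ((f : ℝ) + 1) * 1
      + (∑ i ∈ Finset.range (f + 1), ((f - i : ℕ) : ℝ)) * 1
      + ((f : ℝ) + 1) * (((n - f - 1 : ℕ) : ℝ)) * (1 / (((n - f : ℕ) : ℝ)))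
      ≤ 5 * (f : ℝ) ^ 2 := by
  have hforward := sum_range_succ_tsub_mul_two f
  have hcoded : ((f : ℝ) + 1) * ((n - f - 1 : ℕ) : ℝ) * (1 / ((n - f : ℕ) : ℝ)) ≤ f + 1 := by
    rw [mul_assoc]
    exact mul_le_of_le_one_right (by positivity) (cast_pred_mul_one_div_le_one (n - f))
  have hf : (1 : ℝ) ≤ f := by exact_mod_cast hf1
  nlinarith

/-- Write cost of message-disperse: the sender sends the full value (size 1)
to f+1 servers; the i-th of these forwards the full value to the at most f
later servers among them (f - i further servers for the i-th, i = 0,…,f) and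
sends coded elements of size 1/(n-f) to the remaining n-f-1 servers.
With 1 ≤ f and 2f+1 ≤ n, the total communication cost is at most 5f². -/
theorem soda_write_cost (n f : ℕ) (hf1 : 1 ≤ f) (hfn : 2 * f + 1 ≤ n) :
    ((f : ℝ) + 1) * 1
      + (∑ i ∈ Finset.range (f + 1), ((f - i : ℕ) : ℝ)) * 1
      + ((f : ℝ) + 1) * (((n - f - 1 : ℕ) : ℝ)) * (1 / (((n - f : ℕ) : ℝ)))
      ≤ 5 * (f : ℝ) ^ 2 :=
  soda_write_cost_general n f hf1
end

section
/- If a write operation φ with tag t_φ completes before a read operation π begins, and the read's first phase collects tags from a set of at least n - f servers while the write received acknowledgments from at least k = n - f servers, and f ≤ (n-1)/2, then the tag t_r selected by the reader (the maximum of collected tags) satisfies t_r ≥ t_φ. -/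
open Finset

theorem Finset.inter_nonempty_of_card_sub_le {α : Type*} [Fintype α] [DecidableEq α] {f : ℕ}
    (hf : 2 * f < Fintype.card α) {A R : Finset α}
    (hA : Fintype.card α - f ≤ #A) (hR : Fintype.card α - f ≤ #R) : (A ∩ R).Nonempty :=
  inter_nonempty_of_card_lt_card_add_card (subset_univ A) (subset_univ R)
    (by rw [card_univ]; omega)

theorem reader_tag_at_least_write_tag_general {T : Type*} [LinearOrder T]
    (n f : ℕ) (hn : 2 * f + 1 ≤ n)
    (serverTag : Fin n → T) (tφ tr : T)
    (A R : Finset (Fin n))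
    (hA : n - f ≤ A.card) (hR : n - f ≤ R.card)
    (hAtag : ∀ s ∈ A, tφ ≤ serverTag s)
    (hub : ∀ s ∈ R, serverTag s ≤ tr) :
    tφ ≤ tr := by
  obtain ⟨s, hs⟩ : (A ∩ R).Nonempty :=
    inter_nonempty_of_card_sub_le (f := f) (by rw [Fintype.card_fin]; omega)
      (by simpa using hA) (by simpa using hR)
  obtain ⟨hsA, hsR⟩ := mem_inter.mp hs
  exact (hAtag s hsA).trans (hub s hsR)

/-- If a write with tag t_φ completed (its tag is held by n - f servers) before
a read begins, and the reader collects tags from at least n - f servers and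
selects the maximum t_r, with 2f + 1 ≤ n, then t_r ≥ t_φ. -/
theorem reader_tag_at_least_write_tag {T : Type*} [LinearOrder T]
    (n f : ℕ) (hn : 2 * f + 1 ≤ n)
    (serverTag : Fin n → T) (tφ tr : T)
    (A R : Finset (Fin n))
    (hA : n - f ≤ A.card) (hR : n - f ≤ R.card)
    (hAtag : ∀ s ∈ A, tφ ≤ serverTag s)
    (hub : ∀ s ∈ R, serverTag s ≤ tr)
    (hmem : ∃ s ∈ R, serverTag s = tr) :
    tφ ≤ tr :=
  reader_tag_at_least_write_tag_general n f hn serverTag tφ tr A R hA hR hAtag hub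
end

section
/- If a write creates its new tag as t_w = (t_max.z + 1, w) where t_max is the maximum tag among responses from a majority of servers, then t_w is strictly greater than every tag returned in that majority; in particular t_w is strictly greater than the tag of every write that completed before this write began. -/
/-! A majority and a set of at least `n - f` servers share a server, because `2f + 1 ≤ n` makes
their sizes add up to more than `n`. In the first component that server's tag lies between `tprev`
and `tmax`, so bumping the first component of `tmax` beats every tag read as well as `tprev`, whatever
the writer identifier `w` is. -/

/-- Lexicographic order on tags. -/
def taglt {W : Type*} [LinearOrder W] (t₁ t₂ : ℕ × W) : Prop :=
  t₁.1 < t₂.1 ∨ (t₁.1 = t₂.1 ∧ t₁.2 < t₂.2)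

section Tags

variable {W : Type*} [LinearOrder W]

theorem fst_le_of_not_taglt {t₁ t₂ : ℕ × W} (h : ¬ taglt t₁ t₂) : t₂.1 ≤ t₁.1 :=
  not_lt.mp fun hlt => h (Or.inl hlt)

theorem taglt_succ_of_fst_le {t : ℕ × W} {m : ℕ} (w : W) (h : t.1 ≤ m) : taglt t (m + 1, w) :=
  Or.inl (Nat.lt_succ_of_le h)

end Tags

theorem Finset.inter_nonempty_of_majority {α : Type*} [Fintype α] [DecidableEq α] {f : ℕ}
    (hf : 2 * f + 1 ≤ Fintype.card α) {Q P : Finset α}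
    (hQ : Fintype.card α < 2 * Q.card) (hP : Fintype.card α - f ≤ P.card) : (Q ∩ P).Nonempty :=
  inter_nonempty_of_card_lt_card_add_card (subset_univ Q) (subset_univ P) (by
    rw [card_univ]
    omega)

/-- A writer creating tag t_w = (t_max.z + 1, w), where t_max is the maximum
tag among a majority Q of responding servers, obtains a tag strictly greater
than every tag returned in Q; in particular strictly greater than the tag
t_prev of every write completed (propagated to ≥ n - f servers, with
monotone server tags) before this write began. -/
theorem new_tag_strictly_greater {W : Type*} [LinearOrder W]
    (n f : ℕ) (hn : 2 * f + 1 ≤ n)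
    (tagOf : Fin n → ℕ × W)
    (Q P : Finset (Fin n))
    (hQ : n < 2 * Q.card) (hP : n - f ≤ P.card)
    (tmax tprev tw : ℕ × W) (w : W)
    (hmax : ∀ s ∈ Q, ¬ taglt tmax (tagOf s))
    (hprev : ∀ s ∈ P, ¬ taglt (tagOf s) tprev)
    (htw : tw = (tmax.1 + 1, w)) :
    (∀ s ∈ Q, taglt (tagOf s) tw) ∧ taglt tprev tw := by
  subst htw
  have hQ_le : ∀ s ∈ Q, (tagOf s).1 ≤ tmax.1 := fun s hs => fst_le_of_not_taglt (hmax s hs)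
  obtain ⟨s, hs⟩ := Finset.inter_nonempty_of_majority (Q := Q) (P := P)
    (by rwa [Fintype.card_fin]) (by rwa [Fintype.card_fin]) (by rwa [Fintype.card_fin])
  obtain ⟨hsQ, hsP⟩ := Finset.mem_inter.mp hs
  exact ⟨fun s hs => taglt_succ_of_fst_le w (hQ_le s hs),
    taglt_succ_of_fst_le w ((fst_le_of_not_taglt (hprev s hsP)).trans (hQ_le s hsQ))⟩
end
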